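/- arXiv:2107.08905 — 9 statements merged into one kernel-verified Lean document; each statement's English description precedes it below -/
import Mathlib

section
/- If α is a root of x^3 - x^2 - 2x - 8, then β = (α^2 - α)/2 - 1 is an algebraic integer; in fact β satisfies β^3 + β^2 + 2β - 8 = 0. -/
/-- If `α` is a root of `x^3 - x^2 - 2x - 8`, then `β = (α^2 - α)/2 - 1` is an algebraic
integer, and in fact satisfies `β^3 + β^2 + 2β - 8 = 0`. -/
theorem beta_is_algebraic_integer (α : ℂ) (hα : α ^ 3 - α ^ 2 - 2 * α - 8 = 0) :
    IsIntegral ℤ ((α ^ 2 - α) / 2 - 1) ∧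
      ((α ^ 2 - α) / 2 - 1) ^ 3 + ((α ^ 2 - α) / 2 - 1) ^ 2 +
        2 * ((α ^ 2 - α) / 2 - 1) - 8 = 0 := by
  have key : ((α ^ 2 - α) / 2 - 1) ^ 3 + ((α ^ 2 - α) / 2 - 1) ^ 2 +
      2 * ((α ^ 2 - α) / 2 - 1) - 8 = 0 := by
    linear_combination ((α ^ 3 - 2 * α ^ 2 - α + 10) / 8) * hα
  refine ⟨⟨Polynomial.X ^ 3 + Polynomial.X ^ 2 + 2 * Polynomial.X - 8, ?_, ?_⟩, key⟩
  · monicity!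
  · simp only [Polynomial.eval₂_add, Polynomial.eval₂_sub, Polynomial.eval₂_pow,
      Polynomial.eval₂_mul, Polynomial.eval₂_X, Polynomial.eval₂_ofNat]
    linear_combination key
end

section
/- For all integers x and y, the integer 2x^3 - x^2 y - x y^2 - 2y^3 is even. -/
/-- For all integers `x`, `y`, the value of the index form
`2x^3 - x^2 y - x y^2 - 2y^3` is even. -/
theorem index_form_even (x y : ℤ) : Even (2 * x ^ 3 - x ^ 2 * y - x * y ^ 2 - 2 * y ^ 3) := by
  have h : x ^ 2 * y + x * y ^ 2 = x * y * (x + y) := by ring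
  rcases Int.even_or_odd x with hx | hx <;> rcases Int.even_or_odd y with hy | hy <;>
    simp [Int.even_sub, Int.even_add, Int.even_mul, parity_simps, hx, hy]
end

section
/- Suppose F ∈ ℤ[x] is monic irreducible with root θ, and modulo p we have F = S·P^e - p·M identically in ℤ[x], where P is monic and irreducible mod p, P does not divide S mod p, e ≥ 2, and P divides M mod p. Then the prime p divides the index [O_K : ℤ[θ]] of θ in the ring of integers of K = ℚ(θ). -/
open NumberField Polynomial

/-- Lifting a mod-`p` divisibility to an identity in `ℤ[X]`. -/
lemma lift_dvd_mod (p : ℕ) (P M : ℤ[X])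
    (h : P.map (Int.castRingHom (ZMod p)) ∣ M.map (Int.castRingHom (ZMod p))) :
    ∃ N R : ℤ[X], M = P * N + (p : ℤ[X]) * R := by
  obtain ⟨Q, hQ⟩ := h
  obtain ⟨N, hN⟩ := Polynomial.map_surjective (Int.castRingHom (ZMod p))
    (fun x => by obtain ⟨a, ha⟩ := ZMod.intCast_surjective (n := p) x; exact ⟨a, ha⟩) Q
  have h0 : ∀ i, (p : ℤ) ∣ (M - P * N).coeff i := by
    intro i
    have : ((M - P * N).map (Int.castRingHom (ZMod p))) = 0 := by
      rw [Polynomial.map_sub, Polynomial.map_mul, hN, hQ, sub_self]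
    have := congrArg (fun q => Polynomial.coeff q i) this
    simp only [Polynomial.coeff_map, Polynomial.coeff_zero] at this
    exact_mod_cast (ZMod.intCast_zmod_eq_zero_iff_dvd _ _).mp this
  obtain ⟨R, hR⟩ := (Polynomial.C_dvd_iff_dvd_coeff ((p : ℤ)) (M - P * N)).mpr h0
  exact ⟨N, R, by rw [← sub_eq_iff_eq_add'] ; simpa [Polynomial.C_eq_natCast] using hR⟩

/-- **Dedekind's index criterion (Theorem II, contrapositive form).** Let `θ` be an
algebraic integer generating the number field `K`, with minimal polynomial `F`.  Suppose
`F = S·P^e - p·M` identically in `ℤ[x]`, where `P` is monic, `P mod p` is irreducible,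
`P` does not divide `S` mod `p`, `e ≥ 2`, and `P` divides `M` mod `p`.  Then `p` divides
the index `[𝓞 K : ℤ[θ]]`. -/
theorem dedekind_index_criterion_sufficient
    (K : Type*) [Field K] [NumberField K] (θ : 𝓞 K)
    (hgen : Algebra.adjoin ℚ {(θ : K)} = ⊤) (p : ℕ) (hp : p.Prime)
    (P S M : ℤ[X]) (e : ℕ) (he : 2 ≤ e) (hPmonic : P.Monic)
    (hPirr : Irreducible (P.map (Int.castRingHom (ZMod p))))
    (hPS : ¬ P.map (Int.castRingHom (ZMod p)) ∣ S.map (Int.castRingHom (ZMod p)))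
    (hPM : P.map (Int.castRingHom (ZMod p)) ∣ M.map (Int.castRingHom (ZMod p)))
    (hF : minpoly ℤ θ = S * P ^ e - (p : ℤ[X]) * M) :
    p ∣ (Subalgebra.toSubmodule (Algebra.adjoin ℤ {θ})).toAddSubgroup.index := by
  haveI : Fact p.Prime := ⟨hp⟩
  obtain ⟨k, rfl⟩ : ∃ k, e = k + 2 := ⟨e - 2, by omega⟩
  obtain ⟨N, R, hMNR⟩ := lift_dvd_mod p P M hPM
  -- elements of 𝓞 K
  set a : 𝓞 K := aeval θ S with ha
  set b : 𝓞 K := aeval θ P with hb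
  set n : 𝓞 K := aeval θ N with hn
  set r : 𝓞 K := aeval θ R with hr
  set m : 𝓞 K := aeval θ M with hm
  set α : 𝓞 K := a * b ^ (k + 1) with hα
  set c : 𝓞 K := a * b ^ k * r with hc
  have hminθ : aeval θ (minpoly ℤ θ) = 0 := minpoly.aeval ℤ θ
  have key : a * b ^ (k + 2) = (p : 𝓞 K) * m := by
    have := hminθ
    rw [hF] at this
    simpa [sub_eq_zero, ha, hb, hm] using this
  have hmbn : m = b * n + (p : 𝓞 K) * r := by
    have : aeval θ M = aeval θ (P * N + (p : ℤ[X]) * R) := by rw [← hMNR]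
    simpa [hm, hb, hn, hr] using this
  -- core algebraic identity
  have keyα : α * α = (p : 𝓞 K) * n * α + (p : 𝓞 K) ^ 2 * c := by
    have : α * α = a * b ^ k * (a * b ^ (k + 2)) := by ring
    rw [this, key, hmbn]; ring
  have hp0K : ((p : ℕ) : K) ≠ 0 := by
    exact_mod_cast Nat.cast_ne_zero.mpr hp.ne_zero
  -- β = α / p in K is integral
  set β : K := (α : K) / p with hβ
  have hβsq : β ^ 2 = (n : K) * β + (c : K) := by
    have hK : (α : K) * α = (p : K) * n * α + (p : K) ^ 2 * c := by
      exact_mod_cast congrArg (algebraMap (𝓞 K) K) keyα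
    rw [hβ]
    have hp2 : ((p : K)) ^ 2 ≠ 0 := pow_ne_zero _ hp0K
    field_simp
    linear_combination hK
  have hβint : IsIntegral (𝓞 K) β := by
    refine ⟨X ^ 2 - (C n * X + C c), monic_X_pow_sub ?_, ?_⟩
    · exact lt_of_le_of_lt degree_linear_le (by norm_num)
    · simp only [eval₂_sub, eval₂_pow, eval₂_X, eval₂_add, eval₂_mul, eval₂_C]
      rw [sub_eq_zero]
      simpa using hβsq
  obtain ⟨β', hβ'⟩ := IsIntegrallyClosed.isIntegral_iff.mp hβint
  have hpβ' : (p : 𝓞 K) * β' = α := by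
    have : ((p : 𝓞 K) * β' : K) = ((α : 𝓞 K) : K) := by
      push_cast [hβ']
      rw [hβ]; field_simp
    exact_mod_cast this
  -- β' is not in ℤ[θ]
  have hβ'notmem : β' ∉ Algebra.adjoin ℤ {θ} := by
    intro hmem
    rw [Algebra.adjoin_singleton_eq_range_aeval] at hmem
    obtain ⟨G, hG0⟩ := hmem
    have hG : aeval θ G = β' := hG0
    have hz : aeval θ (S * P ^ (k + 1) - (p : ℤ[X]) * G) = 0 := by
      have : aeval θ (S * P ^ (k + 1)) = (p : 𝓞 K) * aeval θ G := by
        rw [hG, hpβ']; simp [hα, ha, hb]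
      simp [this]
    have hθint : IsIntegral ℤ θ := Algebra.IsIntegral.isIntegral θ
    have hdvd : minpoly ℤ θ ∣ S * P ^ (k + 1) - (p : ℤ[X]) * G :=
      minpoly.isIntegrallyClosed_dvd hθint hz
    -- map to (ZMod p)[X]
    set f := Int.castRingHom (ZMod p)
    have hmapdvd : (minpoly ℤ θ).map f ∣ (S * P ^ (k + 1) - (p : ℤ[X]) * G).map f :=
      Polynomial.map_dvd _ hdvd
    have hpmap : ((p : ℤ[X]).map f) = 0 := by
      simp [Polynomial.map_natCast]
    rw [hF] at hmapdvd
    simp only [Polynomial.map_sub, Polynomial.map_mul, Polynomial.map_pow, hpmap,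
      zero_mul, sub_zero] at hmapdvd
    -- now S̄ * P̄^(k+2) ∣ S̄ * P̄^(k+1)
    have hS0 : S.map f ≠ 0 := fun h => hPS (h ▸ dvd_zero _)
    have hP0 : P.map f ≠ 0 := hPirr.ne_zero
    obtain ⟨t, ht⟩ := hmapdvd
    have h2 : (1 : (ZMod p)[X]) = P.map f * t := by
      have hcan : S.map f * (P.map f ^ (k + 1) * 1) =
          S.map f * (P.map f ^ (k + 1) * (P.map f * t)) := by
        rw [mul_one]; rw [ht]; ring
      exact mul_left_cancel₀ (pow_ne_zero (k + 1) hP0)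
        (mul_left_cancel₀ hS0 hcan)
    exact hPirr.not_isUnit (isUnit_of_dvd_one ⟨t, h2⟩)
  have hαmem : α ∈ Algebra.adjoin ℤ {θ} := by
    rw [Algebra.adjoin_singleton_eq_range_aeval]
    exact ⟨S * P ^ (k + 1), by simp [hα, ha, hb]⟩
  -- conclude via order of β' in the quotient group
  set H := (Subalgebra.toSubmodule (Algebra.adjoin ℤ {θ})).toAddSubgroup with hH
  have hmemH : ∀ x : 𝓞 K, x ∈ H ↔ x ∈ Algebra.adjoin ℤ {θ} := fun x => Iff.rfl
  set x : (𝓞 K) ⧸ H := QuotientAddGroup.mk β' with hx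
  have hx0 : x ≠ 0 := by
    rw [hx, Ne, QuotientAddGroup.eq_zero_iff]
    exact fun h => hβ'notmem ((hmemH β').mp h)
  have hpx : p • x = 0 := by
    rw [hx, ← QuotientAddGroup.mk_nsmul, QuotientAddGroup.eq_zero_iff]
    have : p • β' = α := by rw [nsmul_eq_mul, hpβ']
    rw [this]
    exact (hmemH α).mpr hαmem
  have hord : addOrderOf x = p := by
    have hdvd : addOrderOf x ∣ p := addOrderOf_dvd_of_nsmul_eq_zero hpx
    rcases (Nat.Prime.eq_one_or_self_of_dvd hp _ hdvd) with h1 | h1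
    · exact absurd (AddMonoid.addOrderOf_eq_one_iff.mp h1) hx0
    · exact h1
  have := addOrderOf_dvd_natCard x
  rwa [hord] at this
end

section
/- Suppose F ∈ ℤ[x] is monic irreducible with root θ, F ≡ ∏ Pᵢ^{eᵢ} (mod p) with Pᵢ distinct monic irreducibles in 𝔽_p[x], and write F = ∏ P̃ᵢ^{eᵢ} - pM in ℤ[x] for lifts P̃ᵢ. If no Pᵢ with eᵢ ≥ 2 divides M mod p, then p does not divide the index [O_K : ℤ[θ]]. -/
open NumberField Polynomial

/-- Core saturation lemma: under Dedekind's criterion hypotheses, any `β ∈ 𝓞 K` with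
`p·β ∈ ℤ[θ]` already lies in `ℤ[θ]`. -/
theorem dedekind_core
    (K : Type*) [Field K] [NumberField K] (θ : 𝓞 K)
    (p : ℕ) (hp : p.Prime)
    (m : ℕ) (Pl : Fin m → ℤ[X]) (e : Fin m → ℕ) (M : ℤ[X])
    (hmonic : ∀ i, (Pl i).Monic)
    (hirr : ∀ i, Irreducible ((Pl i).map (Int.castRingHom (ZMod p))))
    (hdist : ∀ i j, i ≠ j →
      (Pl i).map (Int.castRingHom (ZMod p)) ≠ (Pl j).map (Int.castRingHom (ZMod p)))
    (hF : minpoly ℤ θ = (∏ i, (Pl i) ^ e i) - (p : ℤ[X]) * M)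
    (hM : ∀ i, 2 ≤ e i →
      ¬ (Pl i).map (Int.castRingHom (ZMod p)) ∣ M.map (Int.castRingHom (ZMod p)))
    (β : 𝓞 K) (hβmem : (p : 𝓞 K) * β ∈ Algebra.adjoin ℤ {θ}) :
    β ∈ Algebra.adjoin ℤ {θ} := by
  haveI : Fact p.Prime := ⟨hp⟩
  set φ := Int.castRingHom (ZMod p) with hφ
  obtain ⟨A, hA⟩ : ∃ A : ℤ[X], aeval θ A = (p : 𝓞 K) * β := by
    rw [Algebra.adjoin_singleton_eq_range_aeval, AlgHom.mem_range] at hβmem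
    exact hβmem
  have hp0 : (p : 𝓞 K) ≠ 0 := Nat.cast_ne_zero.mpr hp.ne_zero
  have hθint : IsIntegral ℤ θ := RingOfIntegers.isIntegral θ
  have hfmonic : (minpoly ℤ θ).Monic := minpoly.monic hθint
  -- `C p` divides any integer polynomial whose reduction mod `p` vanishes
  have hCp : ∀ d : ℤ[X], d.map φ = 0 → (C (p : ℤ)) ∣ d := by
    intro d hd
    rw [Polynomial.C_dvd_iff_dvd_coeff]
    intro k
    have h1 : ((d.coeff k : ℤ) : ZMod p) = 0 := by
      have := congrArg (fun q => Polynomial.coeff q k) hd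
      simpa [Polynomial.coeff_map] using this
    exact_mod_cast (ZMod.intCast_zmod_eq_zero_iff_dvd _ _).mp h1
  -- reduction of the minimal polynomial mod p
  have hfbar : (minpoly ℤ θ).map φ = ∏ i, ((Pl i).map φ) ^ e i := by
    rw [hF]
    simp [Polynomial.map_sub, Polynomial.map_mul, Polynomial.map_prod, Polynomial.map_pow,
      Polynomial.map_natCast, ZMod.natCast_self]
  -- the key identity `∏ Pᵢ(θ)^{eᵢ} = p · M(θ)`
  have hprodθ : ∏ i, (aeval θ (Pl i)) ^ e i = (p : 𝓞 K) * aeval θ M := by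
    have h0 : aeval θ (minpoly ℤ θ) = 0 := minpoly.aeval ℤ θ
    rw [hF, map_sub, map_mul, map_prod] at h0
    simp only [map_pow, map_natCast] at h0
    have := sub_eq_zero.mp h0
    simpa using this
  -- main step : each `πᵢ^{eᵢ}` divides `Ā`
  have key : ∀ i, ((Pl i).map φ) ^ e i ∣ A.map φ := by
    intro i
    rcases Nat.eq_zero_or_pos (e i) with he0 | hepos
    · simp [he0]
    letI : Algebra ℤ[X] (𝓞 K) := ((aeval θ : ℤ[X] →ₐ[ℤ] 𝓞 K) : ℤ[X] →+* 𝓞 K).toAlgebra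
    have halgmap : ∀ g : ℤ[X], algebraMap ℤ[X] (𝓞 K) g = aeval θ g := fun g => rfl
    haveI : IsScalarTower ℤ ℤ[X] (𝓞 K) :=
      IsScalarTower.of_algebraMap_eq' (Subsingleton.elim _ _)
    haveI : Algebra.IsIntegral ℤ[X] (𝓞 K) :=
      ⟨fun x => (RingOfIntegers.isIntegral x).tower_top⟩
    have hπ0 : (Pl i).map φ ≠ 0 := (hirr i).ne_zero
    haveI : (Ideal.span {(Pl i).map φ}).IsPrime :=
      (Ideal.span_singleton_prime hπ0).mpr
        (UniqueFactorizationMonoid.irreducible_iff_prime.mp (hirr i))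
    set Q : Ideal ℤ[X] := Ideal.comap (mapRingHom φ) (Ideal.span {(Pl i).map φ}) with hQdef
    haveI : Q.IsPrime := Ideal.IsPrime.comap _
    have hmemQ : ∀ g : ℤ[X], g ∈ Q ↔ (Pl i).map φ ∣ g.map φ := by
      intro g
      rw [hQdef, Ideal.mem_comap, Ideal.mem_span_singleton, coe_mapRingHom]
    have hfQ : minpoly ℤ θ ∈ Q := by
      rw [hmemQ, hfbar]
      exact dvd_trans (dvd_pow_self _ (by omega)) (Finset.dvd_prod_of_mem _ (Finset.mem_univ i))
    have hker : (⊥ : Ideal (𝓞 K)).comap (algebraMap ℤ[X] (𝓞 K)) ≤ Q := by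
      intro g hg
      have h1 : aeval θ g = 0 := by
        have := Ideal.mem_comap.mp hg
        rwa [Ideal.mem_bot, halgmap] at this
      obtain ⟨t, rfl⟩ := minpoly.isIntegrallyClosed_dvd hθint h1
      exact Ideal.mul_mem_right _ _ hfQ
    obtain ⟨𝔭, -, h𝔭prime, h𝔭comap⟩ := Ideal.exists_ideal_over_prime_of_isIntegral Q ⊥ hker
    have hmem𝔭 : ∀ g : ℤ[X], aeval θ g ∈ 𝔭 ↔ (Pl i).map φ ∣ g.map φ := by
      intro g
      rw [← hmemQ, ← h𝔭comap, Ideal.mem_comap, halgmap]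
    have hp𝔭 : (p : 𝓞 K) ∈ 𝔭 := by
      have h1 : aeval θ ((p : ℕ) : ℤ[X]) ∈ 𝔭 := by
        rw [hmem𝔭]
        simp [Polynomial.map_natCast, ZMod.natCast_self]
      simpa using h1
    have hPl𝔭 : aeval θ (Pl i) ∈ 𝔭 := (hmem𝔭 _).mpr dvd_rfl
    have h𝔭nebot : 𝔭 ≠ ⊥ := by
      intro h
      rw [h] at hp𝔭
      exact hp0 (Ideal.mem_bot.mp hp𝔭)
    set v : IsDedekindDomain.HeightOneSpectrum (𝓞 K) := ⟨𝔭, h𝔭prime, h𝔭nebot⟩ with hv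
    set val := v.intValuation with hval
    have hvasI : v.asIdeal = 𝔭 := rfl
    have hmemval : ∀ x : 𝓞 K, val x < 1 ↔ x ∈ 𝔭 := by
      intro x
      rw [hval,
        IsDedekindDomain.HeightOneSpectrum.intValuation_lt_one_iff_dvd, hvasI,
        Ideal.dvd_span_singleton]
    have hval_le : ∀ x : 𝓞 K, val x ≤ 1 := by
      intro x
      rw [hval, IsDedekindDomain.HeightOneSpectrum.intValuation_apply]
      exact v.intValuation_le_one x
    have hval_eq1 : ∀ x : 𝓞 K, x ∉ 𝔭 → val x = 1 := by
      intro x hx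
      refine le_antisymm (hval_le x) (not_lt.mp fun h => hx ((hmemval x).mp h))
    have hvalPl : ∀ j, j ≠ i → val (aeval θ (Pl j)) = 1 := by
      intro j hj
      apply hval_eq1
      intro hmem
      have hdvd := (hmem𝔭 (Pl j)).mp hmem
      have heq : (Pl i).map φ = (Pl j).map φ :=
        Polynomial.eq_of_monic_of_associated ((hmonic i).map φ) ((hmonic j).map φ)
          ((hirr i).associated_of_dvd (hirr j) hdvd)
      exact hdist i j (Ne.symm hj) heq
    have hvalprod : val (aeval θ (Pl i)) ^ e i = val ((p : ℕ) : 𝓞 K) * val (aeval θ M) := by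
      have h1 := congrArg val hprodθ
      rw [map_mul, map_prod] at h1
      rw [Finset.prod_eq_single i (fun j _ hj => by rw [map_pow, hvalPl j hj, one_pow])
        (by simp)] at h1
      rw [← h1, map_pow]
    set a := val (aeval θ (Pl i)) with ha
    have ha_lt : a < 1 := (hmemval _).mpr hPl𝔭
    have step : ∀ c, c < e i → ((Pl i).map φ) ^ c ∣ A.map φ →
        ((Pl i).map φ) ^ (c + 1) ∣ A.map φ := by
      intro c hc hdvd
      obtain ⟨B, hB⟩ := hdvd
      by_cases hπB : (Pl i).map φ ∣ B
      · obtain ⟨B', rfl⟩ := hπB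
        exact ⟨B', by rw [hB, pow_succ]; ring⟩
      exfalso
      obtain ⟨U, hU⟩ := Polynomial.map_surjective φ ZMod.intCast_surjective B
      have hW0 : (A - Pl i ^ c * U).map φ = 0 := by
        rw [Polynomial.map_sub, Polynomial.map_mul, Polynomial.map_pow, hU, ← hB, sub_self]
      obtain ⟨W, hW⟩ := hCp _ hW0
      have hAexp : A = Pl i ^ c * U + C (p : ℤ) * W := by
        rw [← hW]; ring
      have hAθ : aeval θ A = (aeval θ (Pl i)) ^ c * aeval θ U + (p : 𝓞 K) * aeval θ W := by
        rw [hAexp]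
        simp [map_add, map_mul, map_pow, aeval_C]
      have hUnotin : aeval θ U ∉ 𝔭 := by
        intro hmem
        exact hπB (hU ▸ (hmem𝔭 U).mp hmem)
      have hUval : val (aeval θ U) = 1 := hval_eq1 _ hUnotin
      rcases Nat.eq_zero_or_pos c with rfl | hcpos
      · have h1 : aeval θ A ∈ 𝔭 := by
          rw [hA]
          exact Ideal.mul_mem_right _ _ hp𝔭
        have h2 : (Pl i).map φ ∣ A.map φ := (hmem𝔭 A).mp h1
        rw [hB, pow_zero, one_mul] at h2
        exact hπB h2
      · have h2 : 2 ≤ e i := by omega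
        have hM1 : val (aeval θ M) = 1 :=
          hval_eq1 _ (fun hmem => hM i h2 ((hmem𝔭 M).mp hmem))
        have hE : a ^ e i = val ((p : ℕ) : 𝓞 K) := by
          rw [ha, hvalprod, hM1, mul_one]
        have hvp0 : val ((p : ℕ) : 𝓞 K) ≠ 0 := by
          rw [hval, IsDedekindDomain.HeightOneSpectrum.intValuation_apply]
          exact v.intValuation_ne_zero _ hp0
        have ha0 : a ≠ 0 := by
          intro h
          exact hvp0 (by rw [← hE, h, zero_pow (by omega : e i ≠ 0)])
        have hac0 : a ^ c ≠ 0 := pow_ne_zero _ ha0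
        have hlt : a ^ e i < a ^ c := by
          have hk : a ^ (e i - c) < 1 := by
            have h3 : a ^ (e i - c - 1) ≤ 1 := Left.pow_le_one_of_le ha_lt.le _
            calc a ^ (e i - c) = a ^ (e i - c - 1) * a := by
                  rw [← pow_succ]; congr 1; omega
              _ ≤ 1 * a := mul_le_mul_left h3 a
              _ = a := one_mul a
              _ < 1 := ha_lt
          calc a ^ e i = a ^ c * a ^ (e i - c) := by rw [← pow_add]; congr 1; omega
            _ < a ^ c * 1 := mul_lt_mul_of_pos_left hk (zero_lt_iff.mpr hac0)
            _ = a ^ c := mul_one _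
        have hyle : val ((p : 𝓞 K) * aeval θ W) ≤ val ((p : ℕ) : 𝓞 K) := by
          rw [map_mul]
          exact mul_le_of_le_one_right' (hval_le _)
        have hxval : val ((aeval θ (Pl i)) ^ c * aeval θ U) = a ^ c := by
          rw [map_mul, map_pow, hUval, mul_one, ha]
        have hylt : val ((p : 𝓞 K) * aeval θ W) < val ((aeval θ (Pl i)) ^ c * aeval θ U) := by
          rw [hxval]
          exact lt_of_le_of_lt (hyle.trans (le_of_eq hE.symm)) hlt
        have hAval : val (aeval θ A) = a ^ c := by
          rw [hAθ, Valuation.map_add_eq_of_lt_left _ hylt, hxval]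
        have hAle : val (aeval θ A) ≤ a ^ e i := by
          rw [hA, map_mul, hE]
          exact mul_le_of_le_one_right' (hval_le _)
        rw [hAval] at hAle
        exact lt_irrefl _ (lt_of_le_of_lt hAle hlt)
    have hind : ∀ c, c ≤ e i → ((Pl i).map φ) ^ c ∣ A.map φ := by
      intro c
      induction c with
      | zero => intro _; simpa using one_dvd _
      | succ n ih => intro h; exact step n (by omega) (ih (by omega))
    exact hind (e i) le_rfl
  -- combine: `f̄ ∣ Ā`
  have hfdvd : (minpoly ℤ θ).map φ ∣ A.map φ := by
    rw [hfbar]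
    refine Finset.prod_dvd_of_coprime ?_ (fun i _ => key i)
    intro j hj k hk hjk
    refine IsCoprime.pow ?_
    rw [(hirr j).coprime_iff_not_dvd]
    intro hd
    exact hdist j k hjk
      (Polynomial.eq_of_monic_of_associated ((hmonic j).map φ) ((hmonic k).map φ)
        ((hirr j).associated_of_dvd (hirr k) hd))
  -- division: write `A = f·Q + p·C`
  have hAR : minpoly ℤ θ * (A /ₘ minpoly ℤ θ) + A %ₘ minpoly ℤ θ = A := by
    rw [add_comm]; exact modByMonic_add_div A (minpoly ℤ θ)
  have hRdvd : (minpoly ℤ θ).map φ ∣ (A %ₘ minpoly ℤ θ).map φ := by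
    have h1 : (A %ₘ minpoly ℤ θ).map φ =
        A.map φ - ((minpoly ℤ θ).map φ) * ((A /ₘ minpoly ℤ θ).map φ) := by
      rw [← Polynomial.map_mul, eq_sub_iff_add_eq, ← Polynomial.map_add, add_comm,
        hAR]
    rw [h1]
    exact dvd_sub hfdvd (Dvd.intro _ rfl)
  have hR0 : (A %ₘ minpoly ℤ θ).map φ = 0 := by
    by_contra hne
    have h1 := Polynomial.degree_le_of_dvd hRdvd hne
    have h2 : ((A %ₘ minpoly ℤ θ).map φ).degree ≤ (A %ₘ minpoly ℤ θ).degree :=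
      Polynomial.degree_map_le
    have h3 : (A %ₘ minpoly ℤ θ).degree < (minpoly ℤ θ).degree :=
      Polynomial.degree_modByMonic_lt A hfmonic
    have h4 : ((minpoly ℤ θ).map φ).degree = (minpoly ℤ θ).degree :=
      hfmonic.degree_map φ
    rw [h4] at h1
    exact absurd (lt_of_le_of_lt (h1.trans h2) h3) (lt_irrefl _)
  obtain ⟨Wr, hWr⟩ := hCp _ hR0
  have hfinal : (p : 𝓞 K) * β = (p : 𝓞 K) * aeval θ Wr := by
    rw [← hA, ← hAR, map_add, map_mul, minpoly.aeval, zero_mul, zero_add, hWr,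
      map_mul, aeval_C]
    push_cast
    ring
  have hβeq : β = aeval θ Wr := mul_left_cancel₀ hp0 hfinal
  rw [hβeq]
  exact aeval_mem_adjoin_singleton ℤ θ

/-- **Dedekind's index criterion (Theorem III).** Let `θ` be an algebraic integer
generating the number field `K`, with minimal polynomial `F`.  Suppose
`F ≡ ∏ Pᵢ^{eᵢ} (mod p)` with the `Pᵢ mod p` pairwise distinct monic irreducibles
(`Pl i` being monic integer lifts), and write `F = ∏ Plᵢ^{eᵢ} - p·M` in `ℤ[x]`.
If no `Pᵢ` with `eᵢ ≥ 2` divides `M` mod `p`, then `p` does not divide the index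
`[𝓞 K : ℤ[θ]]`. -/
theorem dedekind_index_criterion_necessary
    (K : Type*) [Field K] [NumberField K] (θ : 𝓞 K)
    (hgen : Algebra.adjoin ℚ {(θ : K)} = ⊤) (p : ℕ) (hp : p.Prime)
    (m : ℕ) (Pl : Fin m → ℤ[X]) (e : Fin m → ℕ) (M : ℤ[X])
    (hmonic : ∀ i, (Pl i).Monic)
    (hirr : ∀ i, Irreducible ((Pl i).map (Int.castRingHom (ZMod p))))
    (hdist : ∀ i j, i ≠ j →
      (Pl i).map (Int.castRingHom (ZMod p)) ≠ (Pl j).map (Int.castRingHom (ZMod p)))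
    (hF : minpoly ℤ θ = (∏ i, (Pl i) ^ e i) - (p : ℤ[X]) * M)
    (hM : ∀ i, 2 ≤ e i →
      ¬ (Pl i).map (Int.castRingHom (ZMod p)) ∣ M.map (Int.castRingHom (ZMod p))) :
    ¬ p ∣ (Subalgebra.toSubmodule (Algebra.adjoin ℤ {θ})).toAddSubgroup.index := by
  intro hdvd
  haveI : Fact p.Prime := ⟨hp⟩
  set N := Subalgebra.toSubmodule (Algebra.adjoin ℤ {θ}) with hN
  -- the quotient is a torsion module
  have htor : Module.IsTorsion ℤ ((𝓞 K) ⧸ N) := by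
    intro x
    obtain ⟨y, rfl⟩ := Submodule.Quotient.mk_surjective N x
    have hy : (algebraMap (𝓞 K) K y) ∈ Algebra.adjoin ℚ {(θ : K)} := by
      rw [hgen]; trivial
    rw [Algebra.adjoin_singleton_eq_range_aeval, AlgHom.mem_range] at hy
    obtain ⟨g, hg⟩ := hy
    obtain ⟨b, hb⟩ := IsLocalization.integerNormalization_map_to_map (nonZeroDivisors ℤ) g
    set G := IsLocalization.integerNormalization (nonZeroDivisors ℤ) g with hG
    refine ⟨b, ?_⟩
    have h1 : algebraMap (𝓞 K) K ((b : ℤ) • y) = algebraMap (𝓞 K) K (aeval θ G) := by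
      rw [map_zsmul, ← hg, ← map_zsmul (aeval ((θ : K))) (b : ℤ) g, ← hb,
        aeval_map_algebraMap, ← aeval_algebraMap_apply]
    have h2 : (b : ℤ) • y = aeval θ G := RingOfIntegers.coe_injective h1
    rw [← Submodule.Quotient.mk_smul, Submodule.Quotient.mk_eq_zero]
    show (b : ℤ) • y ∈ N
    rw [h2, hN, Subalgebra.mem_toSubmodule]
    exact aeval_mem_adjoin_singleton ℤ θ
  haveI : Module.Finite ℤ ((𝓞 K) ⧸ N) :=
    Module.Finite.of_surjective N.mkQ (Submodule.mkQ_surjective N)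
  haveI hfin : Finite ((𝓞 K) ⧸ N) := Module.finite_of_fg_torsion _ htor
  haveI : Finite (𝓞 K ⧸ N.toAddSubgroup) := hfin
  haveI : Fintype (𝓞 K ⧸ N.toAddSubgroup) := Fintype.ofFinite _
  rw [AddSubgroup.index, Nat.card_eq_fintype_card] at hdvd
  obtain ⟨x, hx⟩ := exists_prime_addOrderOf_dvd_card p hdvd
  obtain ⟨β, rfl⟩ := QuotientAddGroup.mk'_surjective N.toAddSubgroup x
  have hpx : p • (QuotientAddGroup.mk' N.toAddSubgroup β) = 0 := by
    rw [← addOrderOf_dvd_iff_nsmul_eq_zero, hx]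
  have hmem : (p : 𝓞 K) * β ∈ Algebra.adjoin ℤ {θ} := by
    have h1 : p • β ∈ N.toAddSubgroup := by
      have h0 : (QuotientAddGroup.mk' N.toAddSubgroup) (p • β) = 0 := by
        rw [map_nsmul]; exact hpx
      rwa [QuotientAddGroup.mk'_apply, QuotientAddGroup.eq_zero_iff] at h0
    rw [Submodule.mem_toAddSubgroup, hN, Subalgebra.mem_toSubmodule] at h1
    simpa [nsmul_eq_mul] using h1
  have hβ : β ∈ Algebra.adjoin ℤ {θ} :=
    dedekind_core K θ p hp m Pl e M hmonic hirr hdist hF hM β hmem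
  have hzero : (QuotientAddGroup.mk' N.toAddSubgroup) β = 0 := by
    rw [QuotientAddGroup.mk'_apply, QuotientAddGroup.eq_zero_iff]
    rw [Submodule.mem_toAddSubgroup, hN, Subalgebra.mem_toSubmodule]
    exact hβ
  rw [hzero, addOrderOf_zero] at hx
  exact hp.one_lt.ne' hx.symm
end

section
/- Let P, R, S, T, M, N ∈ ℤ[x] with P ≡ R (mod p), S ≡ T (mod p), P monic irreducible mod p, e ≥ 2, and F = P^e S - pM = R^e T - pN. Then P divides M - N modulo p. -/
open Polynomial

/-- From equality of reductions mod `p`, extract a polynomial witness. -/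
lemma eq_add_p_mul_of_map_eq (p : ℕ) (U V : ℤ[X])
    (h : U.map (Int.castRingHom (ZMod p)) = V.map (Int.castRingHom (ZMod p))) :
    ∃ W : ℤ[X], V = U + (p : ℤ[X]) * W := by
  have hd : (C (p : ℤ)) ∣ V - U := by
    rw [Polynomial.C_dvd_iff_dvd_coeff]
    intro i
    have hc : (((V - U).coeff i : ℤ) : ZMod p) = 0 := by
      have := congrArg (fun q => q.coeff i) h
      simp only [Polynomial.coeff_map, Int.coe_castRingHom] at this
      simp [Polynomial.coeff_sub, this]
    exact_mod_cast (ZMod.intCast_zmod_eq_zero_iff_dvd _ p).mp hc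
  obtain ⟨W, hW⟩ := hd
  refine ⟨W, ?_⟩
  have : (C (p : ℤ)) = ((p : ℤ[X])) := by simp
  rw [this] at hW
  linear_combination hW

/-- **Well-definedness lemma for Dedekind's criterion.** Let `p` be a prime, `e ≥ 2`,
and `P, R, S, T, M, N ∈ ℤ[x]` with `P ≡ R (mod p)`, `S ≡ T (mod p)`, `P` irreducible
mod `p`, and `P^e S - pM = R^e T - pN` in `ℤ[x]`.  Then `P` divides `M - N` mod `p`. -/
theorem dedekind_criterion_well_defined
    (p : ℕ) (hp : p.Prime) (e : ℕ) (he : 2 ≤ e) (P R S T M N : ℤ[X])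
    (hPR : P.map (Int.castRingHom (ZMod p)) = R.map (Int.castRingHom (ZMod p)))
    (hST : S.map (Int.castRingHom (ZMod p)) = T.map (Int.castRingHom (ZMod p)))
    (hPirr : Irreducible (P.map (Int.castRingHom (ZMod p))))
    (hFF : P ^ e * S - (p : ℤ[X]) * M = R ^ e * T - (p : ℤ[X]) * N) :
    P.map (Int.castRingHom (ZMod p)) ∣ (M - N).map (Int.castRingHom (ZMod p)) := by
  obtain ⟨A, hA⟩ := eq_add_p_mul_of_map_eq p P R hPR
  obtain ⟨B, hB⟩ := eq_add_p_mul_of_map_eq p S T hST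
  subst hA hB
  set G : ℤ[X] := ∑ i ∈ Finset.range e, P ^ i * (P + (p : ℤ[X]) * A) ^ (e - 1 - i) with hGdef
  have hg : G * (P - (P + (p : ℤ[X]) * A)) = P ^ e - (P + (p : ℤ[X]) * A) ^ e :=
    geom_sum₂_mul P (P + (p : ℤ[X]) * A) e
  have hp0 : (p : ℤ[X]) ≠ 0 := by
    exact_mod_cast Nat.cast_ne_zero.mpr hp.ne_zero
  have hcancel : M - N = -(G * A * S + (P + (p : ℤ[X]) * A) ^ e * B) := by
    apply mul_left_cancel₀ hp0
    linear_combination -hFF - S * hg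
  have hmap := congrArg (Polynomial.map (Int.castRingHom (ZMod p))) hcancel
  have hpz : ((p : ℤ[X]).map (Int.castRingHom (ZMod p))) = 0 := by
    simp [Polynomial.map_natCast, ZMod.natCast_self]
  rw [hmap]
  simp only [Polynomial.map_neg, Polynomial.map_add, Polynomial.map_mul,
    Polynomial.map_pow, Polynomial.map_sum, hpz, zero_mul, add_zero, hGdef]
  rw [dvd_neg]
  apply dvd_add
  · apply dvd_mul_of_dvd_left
    apply dvd_mul_of_dvd_left
    apply Finset.dvd_sum
    intro i hi
    have hie : i + (e - 1 - i) = e - 1 := by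
      simp only [Finset.mem_range] at hi; omega
    rw [← pow_add, hie]
    exact dvd_pow_self _ (by omega)
  · exact dvd_mul_of_dvd_left (dvd_pow_self _ (by omega)) _
end

section
/- Let K be a number field of degree n > p where p is a rational prime that splits completely in the ring of integers O of K (i.e. pO is a product of n distinct prime ideals of residue degree 1). Then for every algebraic integer θ generating K, the prime p divides the index [O : ℤ[θ]]; i.e., p is a common index divisor of K. -/
set_option synthInstance.maxHeartbeats 800000
set_option maxHeartbeats 1600000

open NumberField Polynomial

/-- If `p` is a prime smaller than the degree `n` of a number field `K` and `p` splits
completely in `𝓞 K` (i.e. `p𝓞K` is a product of `n` distinct prime ideals of norm `p`),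
then `p` divides the index `[𝓞 K : ℤ[θ]]` for *every* generator `θ` of `K`; that is,
`p` is a common index divisor of `K`. -/
theorem common_index_divisor_of_splits_completely
    (K : Type*) [Field K] [NumberField K] (n : ℕ) (hn : n = Module.finrank ℚ K)
    (p : ℕ) (hp : p.Prime) (hpn : p < n)
    (𝔭 : Fin n → Ideal (𝓞 K))
    (hprime : ∀ i, (𝔭 i).IsPrime)
    (hdist : ∀ i j, i ≠ j → 𝔭 i ≠ 𝔭 j)
    (hnorm : ∀ i, Ideal.absNorm (𝔭 i) = p)
    (hsplit : Ideal.span {(p : 𝓞 K)} = ∏ i, 𝔭 i) :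
    ∀ θ : 𝓞 K, Algebra.adjoin ℚ {(θ : K)} = ⊤ →
      p ∣ (Subalgebra.toSubmodule (Algebra.adjoin ℤ {θ})).toAddSubgroup.index := by
  intro θ hθ
  by_contra hndvd
  haveI : Fact p.Prime := ⟨hp⟩
  haveI : NeZero p := ⟨hp.ne_zero⟩
  -- the span of p is contained in each 𝔭 i
  have hle : ∀ i, Ideal.span {(p : 𝓞 K)} ≤ 𝔭 i := fun i => by
    rw [hsplit]
    exact Ideal.prod_le_inf.trans (Finset.inf_le (Finset.mem_univ i))
  have hpmem : ∀ i, (p : 𝓞 K) ∈ 𝔭 i := fun i => hle i (Ideal.subset_span rfl)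
  haveI hprimeI : ∀ i, (𝔭 i).IsPrime := hprime
  -- each quotient has char p and there is a bijective hom from ZMod p
  have hcard : ∀ i, Nat.card ((𝓞 K) ⧸ (𝔭 i)) = p := fun i => by
    have h := hnorm i
    rwa [Ideal.absNorm_apply, Submodule.cardQuot_apply] at h
  have hfin : ∀ i, Finite ((𝓞 K) ⧸ (𝔭 i)) := fun i =>
    (Nat.card_ne_zero.mp (by rw [hcard i]; exact hp.ne_zero)).2
  haveI : ∀ i, Nontrivial ((𝓞 K) ⧸ (𝔭 i)) := fun i =>
    Ideal.Quotient.nontrivial_iff.mpr (hprime i).ne_top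
  have hchar : ∀ i, CharP ((𝓞 K) ⧸ (𝔭 i)) p := fun i => by
    have h1 : ((p : ℕ) : (𝓞 K) ⧸ (𝔭 i)) = 0 := by
      rw [← map_natCast (Ideal.Quotient.mk (𝔭 i)), Ideal.Quotient.eq_zero_iff_mem]
      exact hpmem i
    have h2 : ringChar ((𝓞 K) ⧸ (𝔭 i)) ∣ p := ringChar.dvd h1
    rcases (Nat.Prime.eq_one_or_self_of_dvd hp _ h2) with h | h
    · exact absurd h CharP.ringChar_ne_one
    · exact h ▸ ringChar.charP _
  -- the canonical map ZMod p → 𝓞K/𝔭 i is bijective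
  have hbij : ∀ i, Function.Bijective
      (ZMod.castHom (dvd_refl p) ((𝓞 K) ⧸ (𝔭 i))) := fun i => by
    haveI := hchar i
    haveI := hfin i
    refine (Nat.bijective_iff_injective_and_card _).mpr
      ⟨(ZMod.castHom (dvd_refl p) _).injective, ?_⟩
    rw [Nat.card_zmod, hcard i]
  -- integers lying in 𝔭 i are divisible by p
  have hint : ∀ i (e : ℤ), (e : 𝓞 K) ∈ 𝔭 i → (p : ℤ) ∣ e := fun i e he => by
    haveI := hchar i
    rw [← ZMod.intCast_zmod_eq_zero_iff_dvd]
    apply (hbij i).1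
    rw [map_zero, map_intCast, ← map_intCast (Ideal.Quotient.mk (𝔭 i)),
      Ideal.Quotient.eq_zero_iff_mem]
    exact he
  -- residues of θ
  have hres : ∀ i, ∃ c : ZMod p, θ - ((c.val : ℕ) : 𝓞 K) ∈ 𝔭 i := fun i => by
    haveI := hchar i
    obtain ⟨c, hc⟩ := (hbij i).2 (Ideal.Quotient.mk (𝔭 i) θ)
    refine ⟨c, ?_⟩
    rw [← Ideal.Quotient.eq_zero_iff_mem, map_sub, sub_eq_zero, ← hc,
      map_natCast, ZMod.castHom_apply, ← ZMod.natCast_val]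
  choose c hc using hres
  -- pigeonhole: two indices with the same residue
  obtain ⟨i, j, hij, hcij⟩ := Fintype.exists_ne_map_eq_of_card_lt c
    (by rw [ZMod.card, Fintype.card_fin]; exact hpn)
  -- every element of 𝓞 K is congruent mod p to an element of ℤ[θ]
  set H := (Subalgebra.toSubmodule (Algebra.adjoin ℤ {θ})).toAddSubgroup with hH
  have hidx : H.index ≠ 0 := fun h => hndvd (h ▸ dvd_zero p)
  haveI hQfin : Finite ((𝓞 K) ⧸ H) :=
    (Nat.card_ne_zero.mp (by rwa [← AddSubgroup.index_eq_card])).2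
  have hdec : ∀ x : 𝓞 K, ∃ a ∈ Algebra.adjoin ℤ {θ},
      x - a ∈ Ideal.span {(p : 𝓞 K)} := by
    intro x
    have hm : (H.index : ℤ) • x ∈ H := by
      have : (H.index : ℤ) • (x : (𝓞 K) ⧸ H) = 0 := by
        rw [AddSubgroup.index_eq_card]
        simpa using card_nsmul_eq_zero' (x := ((x : (𝓞 K) ⧸ H)))
      rwa [← QuotientAddGroup.mk_zsmul, QuotientAddGroup.eq_zero_iff] at this
    have hcop : IsCoprime (p : ℤ) (H.index : ℤ) :=
      Int.isCoprime_iff_gcd_eq_one.mpr (by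
        simpa [Int.gcd_natCast_natCast] using (hp.coprime_iff_not_dvd.mpr hndvd))
    obtain ⟨u, v, huv⟩ := hcop
    refine ⟨v • ((H.index : ℤ) • x), Subalgebra.smul_mem _ hm v, ?_⟩
    have hx : x - v • ((H.index : ℤ) • x) = (u * (p : ℤ)) • x := by
      rw [← mul_smul, sub_eq_iff_eq_add, ← add_smul, huv, one_smul]
    rw [hx]
    have : (u * (p : ℤ)) • x = (u : 𝓞 K) * ((p : 𝓞 K) * x) := by
      push_cast [zsmul_eq_mul]; ring
    rw [this]
    exact Ideal.mul_mem_left _ _ (Ideal.mul_mem_right _ _ (Ideal.subset_span rfl))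
  -- the two primes are maximal and coprime
  have hmax : ∀ k, (𝔭 k).IsMaximal := fun k =>
    Ideal.IsPrime.isMaximal (hprime k) (fun hbot => by
      have : (p : 𝓞 K) ≠ 0 := by
        exact_mod_cast (Nat.cast_ne_zero (R := 𝓞 K)).mpr hp.ne_zero
      exact this (by simpa [hbot] using hpmem k))
  have hsup : 𝔭 i ⊔ 𝔭 j = ⊤ :=
    (hmax i).coprime_of_ne (hmax j) (hdist i j hij)
  obtain ⟨y, hy, z, hz, hyz⟩ := Submodule.mem_sup.mp (hsup ▸ Submodule.mem_top :
    (1 : 𝓞 K) ∈ 𝔭 i ⊔ 𝔭 j)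
  -- decompose y
  obtain ⟨a, ha, hya⟩ := hdec y
  have hai : a ∈ 𝔭 i := by
    have : a = y - (y - a) := by ring
    exact this ▸ Ideal.sub_mem _ hy (hle i hya)
  have haj : a - 1 ∈ 𝔭 j := by
    have h1 : a - 1 = -(y - a) + -z := by
      have : y = 1 - z := by linear_combination hyz
      rw [this]; ring
    rw [h1]
    exact Ideal.add_mem _ (neg_mem (hle j hya)) (neg_mem hz)
  -- a is a polynomial in θ
  have : a ∈ (Polynomial.aeval (R := ℤ) θ).range := by
    rwa [← Algebra.adjoin_singleton_eq_range_aeval]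
  obtain ⟨P, hP⟩ := this
  set N : ℕ := (c i).val with hN
  set e : ℤ := P.eval (N : ℤ) with he
  -- a ≡ e mod 𝔭 k whenever θ ≡ N mod 𝔭 k
  have key : ∀ k, θ - ((N : ℕ) : 𝓞 K) ∈ 𝔭 k → a - ((e : ℤ) : 𝓞 K) ∈ 𝔭 k := by
    intro k hk
    rw [← Ideal.Quotient.eq_zero_iff_mem, map_sub, sub_eq_zero, ← hP]
    have hθN : Ideal.Quotient.mk (𝔭 k) θ = Ideal.Quotient.mk (𝔭 k) ((N : ℕ) : 𝓞 K) := by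
      rw [Ideal.Quotient.mk_eq_mk_iff_sub_mem]; exact hk
    calc Ideal.Quotient.mk (𝔭 k) (Polynomial.aeval θ P)
        = Polynomial.aeval (Ideal.Quotient.mk (𝔭 k) θ) P := by
          exact (Polynomial.aeval_algHom_apply (Ideal.Quotient.mkₐ ℤ (𝔭 k)) θ P).symm
      _ = Polynomial.aeval (((N : ℕ) : (𝓞 K) ⧸ (𝔭 k))) P := by rw [hθN, map_natCast]
      _ = ((e : ℤ) : (𝓞 K) ⧸ (𝔭 k)) := by
          rw [he, Polynomial.aeval_def]
          have hNc : (((N : ℕ)) : (𝓞 K) ⧸ (𝔭 k)) = ((N : ℤ) : (𝓞 K) ⧸ (𝔭 k)) := by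
            push_cast; ring
          rw [hNc, Polynomial.eval₂_at_intCast]
          simp [algebraMap_int_eq, eq_intCast]
      _ = Ideal.Quotient.mk (𝔭 k) ((e : ℤ) : 𝓞 K) := by rw [map_intCast]
  -- conclude
  have hdvd1 : (p : ℤ) ∣ e := by
    refine hint i e ?_
    have := key i (hc i)
    have : ((e : ℤ) : 𝓞 K) = a - (a - ((e : ℤ) : 𝓞 K)) := by ring
    rw [this]
    exact Ideal.sub_mem _ hai (key i (hc i))
  have hdvd2 : (p : ℤ) ∣ e - 1 := by
    have hcj : θ - ((N : ℕ) : 𝓞 K) ∈ 𝔭 j := by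
      rw [hN, hcij]; exact hc j
    have h2 : ((e - 1 : ℤ) : 𝓞 K) = (a - 1) - (a - ((e : ℤ) : 𝓞 K)) := by push_cast; ring
    exact hint j _ (h2 ▸ Ideal.sub_mem _ haj (key j hcj))
  have : (p : ℤ) ∣ 1 := by
    have := dvd_sub hdvd1 hdvd2
    simpa using this
  have hp1 : p ∣ 1 := Int.natCast_dvd_natCast.mp (by exact_mod_cast this)
  exact hp.one_lt.ne' (Nat.dvd_one.mp hp1)
end

section
/- Let K = ℚ(α) with α a root of x^3 - x^2 - 2x - 8. Then the discriminant of K is -503, and {1, α, (α² - α - 2)/2} is an integral basis of the ring of integers of K. -/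
open NumberField Polynomial
open Matrix

/-- For Dedekind's cubic field `K = ℚ(α)` with `α` a root of `x^3 - x^2 - 2x - 8`, the
discriminant of `K` is `-503`, and `{1, α, (α² - α - 2)/2}` is an integral basis of the
ring of integers of `K`. -/
theorem dedekind_field_discriminant_and_integral_basis
    (K : Type*) [Field K] [NumberField K] (α : K)
    (hα : α ^ 3 - α ^ 2 - 2 * α - 8 = 0)
    (hgen : Algebra.adjoin ℚ {α} = ⊤) :
    NumberField.discr K = -503 ∧
      ∃ b : Module.Basis (Fin 3) ℤ (𝓞 K),
        (b 0 : K) = 1 ∧ (b 1 : K) = α ∧ (b 2 : K) = (α ^ 2 - α - 2) / 2 := by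
  classical
  set β : K := (α ^ 2 - α - 2) / 2 with hβdef
  have hb2 : (2 : K) * β = α ^ 2 - α - 2 := by
    rw [hβdef]; field_simp
  -- the integer polynomial
  set fZ : ℤ[X] := X ^ 3 - X ^ 2 - C 2 * X - C 8 with hfZ
  have hfZmonic : fZ.Monic := by
    rw [hfZ]; monicity!
  have hfZdeg : fZ.natDegree = 3 := by
    rw [hfZ]; compute_degree!
  have hirrZ : Irreducible fZ := by
    apply hfZmonic.irreducible_of_irreducible_map (Int.castRingHom (ZMod 3))
    have hmm : (fZ.map (Int.castRingHom (ZMod 3))).Monic := hfZmonic.map _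
    have hdeg3 : (fZ.map (Int.castRingHom (ZMod 3))).natDegree = 3 := by
      rw [hfZmonic.natDegree_map]; exact hfZdeg
    rw [hmm.irreducible_iff_roots_eq_zero_of_degree_le_three (by omega) (by omega)]
    rw [Multiset.eq_zero_iff_forall_notMem]
    intro a ha
    rw [mem_roots hmm.ne_zero, IsRoot.def] at ha
    simp only [hfZ, Polynomial.map_sub, Polynomial.map_pow, Polynomial.map_mul,
      map_X, map_C, eval_sub, eval_pow, eval_mul, eval_X, eval_C] at ha
    push_cast at ha
    have hall : ∀ a : ZMod 3, ¬ (a ^ 3 - a ^ 2 - 2 * a - 8 = 0) := by decide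
    exact hall a ha
  have hfQmonic : (fZ.map (algebraMap ℤ ℚ)).Monic := hfZmonic.map _
  have hirrQ : Irreducible (fZ.map (algebraMap ℤ ℚ)) :=
    (hfZmonic.irreducible_iff_irreducible_map_fraction_map).mp hirrZ
  have haev : aeval α (fZ.map (algebraMap ℤ ℚ)) = 0 := by
    rw [aeval_map_algebraMap]
    simp only [hfZ, _root_.map_sub, _root_.map_pow, _root_.map_mul, aeval_X, aeval_C, eq_intCast, _root_.map_ofNat]
    push_cast
    linear_combination hα
  have hmin : minpoly ℚ α = fZ.map (algebraMap ℤ ℚ) :=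
    (minpoly.eq_of_irreducible_of_monic hirrQ haev hfQmonic).symm
  have hint : IsIntegral ℚ α := IsIntegral.of_finite ℚ α
  -- power basis
  let e : (Algebra.adjoin ℚ ({α} : Set K)) ≃ₐ[ℚ] K :=
    (Subalgebra.equivOfEq _ _ hgen).trans Subalgebra.topEquiv
  let pb : PowerBasis ℚ K := (Algebra.adjoin.powerBasis hint).map e
  have hpbgen : pb.gen = α := rfl
  have hdim : pb.dim = 3 := by
    show (minpoly ℚ α).natDegree = 3
    rw [hmin, hfZmonic.natDegree_map]; exact hfZdeg
  let B : Module.Basis (Fin 3) ℚ K := pb.basis.reindex (finCongr hdim)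
  have hB0 : B 0 = 1 := by
    simp [B, pb.basis_eq_pow, hpbgen]
  have hB1 : B 1 = α := by
    simp [B, pb.basis_eq_pow, hpbgen]
  have hB2 : B 2 = α ^ 2 := by
    simp [B, pb.basis_eq_pow, hpbgen]
  have hrepr : ∀ (x : K) (c0 c1 c2 : ℚ),
      x = (c0 : K) * 1 + (c1 : K) * α + (c2 : K) * α ^ 2 →
      B.repr x 0 = c0 ∧ B.repr x 1 = c1 ∧ B.repr x 2 = c2 := by
    intro x c0 c1 c2 hx
    have hx' : x = ∑ j : Fin 3, (![c0, c1, c2] j) • B j := by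
      rw [Fin.sum_univ_three]
      simp only [Matrix.cons_val_zero, Matrix.cons_val_one, Matrix.head_cons,
        Matrix.cons_val_two, Matrix.tail_cons, hB0, hB1, hB2, Rat.smul_def]
      exact hx
    rw [hx', B.repr_sum_self]
    exact ⟨rfl, rfl, rfl⟩
  have htrace : ∀ x : K, Algebra.trace ℚ K x
      = B.repr (x * 1) 0 + B.repr (x * α) 1 + B.repr (x * α ^ 2) 2 := by
    intro x
    rw [Algebra.trace_eq_matrix_trace B x, Matrix.trace_fin_three]
    simp only [Algebra.leftMulMatrix_eq_repr_mul, hB0, hB1, hB2]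
  have T1 : Algebra.trace ℚ K 1 = 3 := by
    rw [htrace, (hrepr ((1 : K) * 1) 1 0 0 (by push_cast; ring)).1,
      (hrepr ((1 : K) * α) 0 1 0 (by push_cast; ring)).2.1,
      (hrepr ((1 : K) * α ^ 2) 0 0 1 (by push_cast; ring)).2.2]
    norm_num
  have Tα : Algebra.trace ℚ K α = 1 := by
    rw [htrace, (hrepr (α * 1) 0 1 0 (by push_cast; ring)).1,
      (hrepr (α * α) 0 0 1 (by push_cast; ring)).2.1,
      (hrepr (α * α ^ 2) 8 2 1 (by push_cast; linear_combination hα)).2.2]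
    norm_num
  have Tα2 : Algebra.trace ℚ K (α ^ 2) = 5 := by
    rw [htrace, (hrepr (α ^ 2 * 1) 0 0 1 (by push_cast; ring)).1,
      (hrepr (α ^ 2 * α) 8 2 1 (by push_cast; linear_combination hα)).2.1,
      (hrepr (α ^ 2 * α ^ 2) 8 10 3 (by push_cast; linear_combination (α + 1) * hα)).2.2]
    norm_num
  have Tβ : Algebra.trace ℚ K β = -1 := by
    rw [htrace,
      (hrepr (β * 1) (-1) (-1/2) (1/2)
        (by push_cast; linear_combination (1/2) * hb2)).1,
      (hrepr (β * α) 4 0 0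
        (by push_cast; linear_combination (α/2) * hb2 + (1/2) * hα)).2.1,
      (hrepr (β * α ^ 2) 0 4 0
        (by push_cast; linear_combination (α^2/2) * hb2 + (α/2) * hα)).2.2]
    norm_num
  have Tαβ : Algebra.trace ℚ K (α * β) = 12 := by
    rw [htrace,
      (hrepr (α * β * 1) 4 0 0
        (by push_cast; linear_combination (α/2) * hb2 + (1/2) * hα)).1,
      (hrepr (α * β * α) 0 4 0
        (by push_cast; linear_combination (α^2/2) * hb2 + (α/2) * hα)).2.1,
      (hrepr (α * β * α ^ 2) 0 0 4
        (by push_cast; linear_combination (α^3/2) * hb2 + (α^2/2) * hα)).2.2]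
    norm_num
  have e1 : β * β * 1 = ((-1 : ℚ) : K) * 1 + ((5/2 : ℚ) : K) * α + ((-1/2 : ℚ) : K) * α ^ 2 := by
    push_cast
    linear_combination (β/2 + (α^2 - α - 2)/4) * hb2 + ((α - 1)/4) * hα
  have e2 : β * β * α = ((-4 : ℚ) : K) * 1 + ((-2 : ℚ) : K) * α + ((2 : ℚ) : K) * α ^ 2 := by
    push_cast
    linear_combination (α*β/2 + α*(α^2 - α - 2)/4) * hb2 + ((α^2 - α - 2)/4) * hα
  have e3 : β * β * α ^ 2 = ((16 : ℚ) : K) * 1 + ((0 : ℚ) : K) * α + ((0 : ℚ) : K) * α ^ 2 := by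
    push_cast
    linear_combination ((α*β + 4)*α/2) * hb2 + ((α*β + 4)/2) * hα
  have Tβ2 : Algebra.trace ℚ K (β * β) = -3 := by
    rw [htrace, (hrepr (β * β * 1) (-1) (5/2) (-1/2) e1).1,
      (hrepr (β * β * α) (-4) (-2) 2 e2).2.1,
      (hrepr (β * β * α ^ 2) 16 0 0 e3).2.2]
    norm_num
  -- the candidate basis over ℚ
  set c : Fin 3 → K := ![1, α, β] with hc
  have hdiscrQ : Algebra.discr ℚ c = -503 := by
    rw [Algebra.discr_def, Matrix.det_fin_three]
    simp only [Algebra.traceMatrix_apply, Algebra.traceForm_apply, hc,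
      Matrix.cons_val_zero, Matrix.cons_val_one, Matrix.head_cons,
      Matrix.cons_val_two, Matrix.tail_cons]
    rw [show (1 : K) * 1 = 1 by ring, show (1 : K) * α = α by ring,
      show α * (1 : K) = α by ring, show (1 : K) * β = β by ring,
      show β * (1 : K) = β by ring, show α * α = α ^ 2 by ring,
      show β * α = α * β by ring]
    rw [T1, Tα, Tα2, Tβ, Tαβ, Tβ2]
    norm_num
  -- integrality
  have hαZ : IsIntegral ℤ α := by
    refine ⟨fZ, hfZmonic, ?_⟩
    rw [← aeval_def]
    simp only [hfZ, _root_.map_sub, _root_.map_pow, _root_.map_mul, aeval_X, aeval_C, eq_intCast, _root_.map_ofNat]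
    push_cast
    linear_combination hα
  have hβZ : IsIntegral ℤ β := by
    refine ⟨X ^ 3 + X ^ 2 + C 2 * X - C 8, by monicity!, ?_⟩
    rw [← aeval_def]
    simp only [_root_.map_add, _root_.map_sub, _root_.map_pow, aeval_X, aeval_C, _root_.map_mul, eq_intCast, _root_.map_ofNat]
    push_cast
    linear_combination (1/8 * (4*β^2 + 2*β*(α^2 - α - 2) + (α^2 - α - 2)^2
        + 4*β + 2*(α^2 - α - 2) + 8)) * hb2
      + ((α^3 - 2*α^2 - α + 10)/8) * hα
  let v : Fin 3 → (𝓞 K) := ![1, ⟨α, hαZ⟩, ⟨β, hβZ⟩]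
  have hcv : ∀ i, (algebraMap (𝓞 K) K) (v i) = c i := by
    intro i
    fin_cases i <;> simp [v, hc] <;> rfl
  -- a `Fin 3`-indexed integral basis
  have hfinrank : Module.finrank ℚ K = 3 := by rw [pb.finrank, hdim]
  have hcard : Fintype.card (Module.Free.ChooseBasisIndex ℤ (𝓞 K)) = 3 := by
    rw [← Module.finrank_eq_card_chooseBasisIndex, RingOfIntegers.rank, hfinrank]
  let C : Module.Basis (Fin 3) ℤ (𝓞 K) :=
    (RingOfIntegers.basis K).reindex (Fintype.equivFinOfCardEq hcard)
  have hCdiscr : Algebra.discr ℤ (⇑C) = NumberField.discr K := NumberField.discr_eq_discr K C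
  set d : ℤ := (C.toMatrix v).det with hd
  have hvC : (⇑C) ᵥ* ((C.toMatrix v).map (algebraMap ℤ (𝓞 K))) = v :=
    C.toMatrix_map_vecMul v
  have h1 : Algebra.discr ℤ v = d ^ 2 * NumberField.discr K := by
    rw [← hCdiscr, ← hvC, Algebra.discr_of_matrix_vecMul]
  have htm : Algebra.traceMatrix ℚ c = (algebraMap ℤ ℚ).mapMatrix (Algebra.traceMatrix ℤ v) := by
    ext i j
    rw [RingHom.mapMatrix_apply, Matrix.map_apply, Algebra.traceMatrix_apply,
      Algebra.traceMatrix_apply, Algebra.traceForm_apply, Algebra.traceForm_apply,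
      ← hcv i, ← hcv j, ← _root_.map_mul,
      Algebra.trace_localization ℤ (nonZeroDivisors ℤ)]
  have hcast : ((Algebra.discr ℤ v : ℤ) : ℚ) = Algebra.discr ℚ c := by
    rw [Algebra.discr_def, Algebra.discr_def, htm, ← RingHom.map_det]
    simp
  have hvd : Algebra.discr ℤ v = -503 := by
    have h5 : ((Algebra.discr ℤ v : ℤ) : ℚ) = ((-503 : ℤ) : ℚ) := by
      rw [hcast, hdiscrQ]; norm_num
    exact_mod_cast h5
  have key : (-503 : ℤ) = d ^ 2 * NumberField.discr K := by rw [← hvd, h1]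
  have hdvd : d ^ 2 ∣ (503 : ℤ) := ⟨-NumberField.discr K, by linear_combination -key⟩
  have hd1 : d = 1 ∨ d = -1 := by
    have hnat : d.natAbs ^ 2 ∣ 503 := by
      have h6 := Int.natAbs_dvd_natAbs.mpr hdvd
      simpa [Int.natAbs_pow] using h6
    have h7 : d.natAbs ∣ 503 := dvd_trans (dvd_pow_self _ two_ne_zero) hnat
    have h503 : Nat.Prime 503 := by norm_num
    rcases h503.eq_one_or_self_of_dvd _ h7 with h | h
    · omega
    · exfalso
      rw [h] at hnat
      have := Nat.le_of_dvd (by norm_num) hnat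
      norm_num at this
  have hd2 : d ^ 2 = 1 := by rcases hd1 with h | h <;> rw [h] <;> norm_num
  have hdiscrK : NumberField.discr K = -503 := by
    rw [hd2, one_mul] at key; omega
  have hunit : IsUnit (C.det v) := by
    rw [Module.Basis.det_apply, ← hd]
    rcases hd1 with h | h <;> rw [h]
    · exact isUnit_one
    · exact isUnit_one.neg
  obtain ⟨hli, hsp⟩ := (Module.Basis.is_basis_iff_det C).mpr hunit
  refine ⟨hdiscrK, Module.Basis.mk hli hsp.ge, ?_, ?_, ?_⟩ <;>
    simp [Module.Basis.mk_apply, v] <;> rfl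
end

section
/- Let O be the ring of integers of the cubic field K = ℚ(α) with α³ = α² + 2α + 8, and β = (α² - α - 2)/2. Then every element ω = z + xα + yβ of O (with z, x, y ∈ ℤ) satisfies ω² ≡ ω (mod 2O). -/
open NumberField

/-- In the ring of integers `O` of Dedekind's cubic field, with `α³ = α² + 2α + 8` and
`β = (α² - α - 2)/2`, every element `ω = z + xα + yβ` (with `z, x, y ∈ ℤ`) satisfies
`ω² ≡ ω (mod 2O)`. -/
theorem omega_sq_congruent_omega_mod_two
    (K : Type*) [Field K] [NumberField K] (α β : 𝓞 K)
    (hα : α ^ 3 = α ^ 2 + 2 * α + 8)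
    (hβ : 2 * β = α ^ 2 - α - 2)
    (hgen : Algebra.adjoin ℚ {(α : K)} = ⊤) (z x y : ℤ) :
    ((z : 𝓞 K) + x * α + y * β) ^ 2 - ((z : 𝓞 K) + x * α + y * β) ∈
      Ideal.span {(2 : 𝓞 K)} := by
  have h2 : (2 : 𝓞 K) ≠ 0 := two_ne_zero
  -- α * β = 4
  have hαβ : α * β = 4 := by
    have h : (2 : 𝓞 K) * (α * β) = 2 * 4 := by
      linear_combination α * hβ + hα
    exact mul_left_cancel₀ h2 h
  -- β ^ 2 = 2α - 2 - β
  have hβsq : β ^ 2 = 2 * α - 2 - β := by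
    have h : (2 : 𝓞 K) * ((2 : 𝓞 K) * (β ^ 2)) = 2 * (2 * (2 * α - 2 - β)) := by
      linear_combination (2 * β + α ^ 2 - α) * hβ + (α - 1) * hα
    exact mul_left_cancel₀ h2 (mul_left_cancel₀ h2 h)
  -- α ^ 2 = 2β + α + 2
  have hα2 : α ^ 2 = 2 * β + α + 2 := by linear_combination -hβ
  obtain ⟨a, ha⟩ : ∃ a, z ^ 2 - z = 2 * a := by
    obtain ⟨t, ht⟩ := Int.even_mul_succ_self (z - 1)
    exact ⟨t, by linear_combination ht⟩
  obtain ⟨b, hb⟩ : ∃ b, x ^ 2 - x = 2 * b := by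
    obtain ⟨t, ht⟩ := Int.even_mul_succ_self (x - 1)
    exact ⟨t, by linear_combination ht⟩
  obtain ⟨c, hc⟩ : ∃ c, y ^ 2 - y = 2 * c := by
    obtain ⟨t, ht⟩ := Int.even_mul_succ_self (y - 1)
    exact ⟨t, by linear_combination ht⟩
  have ha' : ((z : 𝓞 K)) ^ 2 - z = 2 * a := by exact_mod_cast congrArg (Int.cast : ℤ → 𝓞 K) ha
  have hb' : ((x : 𝓞 K)) ^ 2 - x = 2 * b := by exact_mod_cast congrArg (Int.cast : ℤ → 𝓞 K) hb
  have hc' : ((y : 𝓞 K)) ^ 2 - y = 2 * c := by exact_mod_cast congrArg (Int.cast : ℤ → 𝓞 K) hc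
  rw [Ideal.mem_span_singleton]
  refine ⟨(a : 𝓞 K) + x ^ 2 - y ^ 2 + 4 * x * y + ((b : 𝓞 K) + y ^ 2 + z * x) * α
      + ((x : 𝓞 K) ^ 2 - c - y + z * y) * β, ?_⟩
  linear_combination (x : 𝓞 K) ^ 2 * hα2 + (y : 𝓞 K) ^ 2 * hβsq
    + 2 * (x : 𝓞 K) * y * hαβ + ha' + (α : 𝓞 K) * hb' - β * hc'
end

section
/- Let O be the ring of integers of a number field and suppose every ω ∈ O satisfies ω² ≡ ω (mod 2O). Then 2O is squarefree (not divisible by the square of any prime ideal) and every prime ideal dividing 2O has norm 2. -/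
open NumberField

set_option synthInstance.maxHeartbeats 1000000 in
set_option maxHeartbeats 1000000 in
/-- If every element `ω` of the ring of integers `O` of a number field satisfies
`ω² ≡ ω (mod 2O)`, then the ideal `2O` is squarefree (no prime ideal divides it twice)
and every prime ideal dividing `2O` has norm `2`. -/
theorem two_squarefree_of_omega_sq_congruent
    (K : Type*) [Field K] [NumberField K]
    (h : ∀ ω : 𝓞 K, ω ^ 2 - ω ∈ Ideal.span {(2 : 𝓞 K)}) :
    Squarefree (Ideal.span {(2 : 𝓞 K)}) ∧
      ∀ 𝔭 : Ideal (𝓞 K), 𝔭.IsPrime → 𝔭 ∣ Ideal.span {(2 : 𝓞 K)} →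
        Ideal.absNorm 𝔭 = 2 := by
  set I : Ideal (𝓞 K) := Ideal.span {(2 : 𝓞 K)} with hI
  -- I is a radical ideal
  have hrad : ∀ (a : 𝓞 K) (n : ℕ), 0 < n → a ^ n ∈ I → a ∈ I := by
    intro a n hn han
    induction n with
    | zero => omega
    | succ m ih =>
      rcases Nat.eq_zero_or_pos m with hm | hm
      · subst hm; simpa using han
      · apply ih hm
        have h2 : a ^ 2 - a ∈ I := h a
        obtain ⟨k, rfl⟩ := Nat.exists_eq_succ_of_ne_zero hm.ne'
        have hfac : a ^ (k + 1) - a ^ (k + 1 + 1) = a ^ k * (a - a ^ 2) := by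
          ring
        have hmem : a ^ (k + 1) - a ^ (k + 1 + 1) ∈ I := by
          rw [hfac]
          exact Ideal.mul_mem_left _ _ (by simpa using I.neg_mem h2)
        have := I.add_mem hmem han
        simpa using this
  constructor
  · -- Squarefree
    have hne : I ≠ 0 := by
      rw [hI, Ideal.zero_eq_bot, Ne, Ideal.span_singleton_eq_bot]
      exact two_ne_zero
    refine IsRadical.squarefree hne ?_
    intro n J hJ
    rcases Nat.eq_zero_or_pos n with hn | hn
    · subst hn
      simp only [pow_zero] at hJ
      have htop : I = ⊤ := by
        rw [Ideal.one_eq_top] at hJ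
        exact top_le_iff.mp (Ideal.le_of_dvd hJ)
      rw [Ideal.dvd_iff_le, htop]; exact le_top
    · rw [Ideal.dvd_iff_le] at hJ ⊢
      intro x hx
      exact hrad x n hn (hJ (Ideal.pow_mem_pow hx n))
  · intro 𝔭 hp hdvd
    have hle : I ≤ 𝔭 := Ideal.le_of_dvd hdvd
    haveI := hp
    have key : ∀ x : 𝓞 K ⧸ 𝔭, x = 0 ∨ x = 1 := by
      intro x
      obtain ⟨a, rfl⟩ := Ideal.Quotient.mk_surjective x
      have h0 : Ideal.Quotient.mk 𝔭 (a ^ 2 - a) = 0 :=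
        Ideal.Quotient.eq_zero_iff_mem.mpr (hle (h a))
      have heq : (Ideal.Quotient.mk 𝔭 a) * (Ideal.Quotient.mk 𝔭 a - (1 : 𝓞 K ⧸ 𝔭)) = 0 := by
        have h0' : (Ideal.Quotient.mk 𝔭 a) ^ 2 - Ideal.Quotient.mk 𝔭 a = 0 := by
          simpa using h0
        linear_combination h0'
      rcases mul_eq_zero.mp heq with h1 | h1
      · exact Or.inl h1
      · exact Or.inr (by linear_combination h1)
    have h01 : (0 : 𝓞 K ⧸ 𝔭) ≠ 1 := fun hc =>
      hp.ne_top (Ideal.Quotient.zero_eq_one_iff.mp hc)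
    rw [Ideal.absNorm_apply, Submodule.cardQuot_apply]
    rw [Nat.card_eq_two_iff' (0 : 𝓞 K ⧸ 𝔭)]
    exact ⟨1, h01.symm, fun z hz => (key z).resolve_left hz⟩
end
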